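/- arXiv:1505.01460 — 3 statements merged into one kernel-verified Lean document; each statement's English description precedes it below -/
import Mathlib

section
/- Let G = (A, B, E) be a bipartite graph with a maximum matching M*. Let A' ⊆ A be a uniformly random subset of size k, and for each a ∈ A' let E'[a] be an arbitrary set of min{k, deg(a)} edges incident to a. Then the graph on edge set ∪_{a∈A'} E'[a] contains a matching saturating all vertices of A' ∩ A(M*), where A(M*) denotes the A-endpoints of M*. In particular, the maximum matching among the retained edges has size at least |A' ∩ A(M*)|. -/
/-- A set of edges of a bipartite graph (with parts α and β) is a matching if no two
    distinct edges share an endpoint. -/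
def IsMatching {α β : Type*} (M : Finset (α × β)) : Prop :=
  ∀ e ∈ M, ∀ e' ∈ M, e ≠ e' → e.1 ≠ e'.1 ∧ e.2 ≠ e'.2

/-- If A' is a k-subset of A and for each a ∈ A' we retain min{k, deg(a)} arbitrary
    incident edges, then the retained edges contain a matching saturating A' ∩ A(M*),
    where M* is a maximum matching. -/
theorem stmt_6 {α β : Type*} [Fintype α] [Fintype β] [DecidableEq α] [DecidableEq β]
    (E Mstar : Finset (α × β)) (hME : Mstar ⊆ E) (hM : IsMatching Mstar)
    (hmax : ∀ N ⊆ E, IsMatching N → N.card ≤ Mstar.card)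
    (k : ℕ) (hk : 1 ≤ k)
    (A' : Finset α) (hA' : A'.card = k)
    (E' : α → Finset (α × β))
    (hE'sub : ∀ a ∈ A', E' a ⊆ E.filter (fun e => e.1 = a))
    (hE'card : ∀ a ∈ A', (E' a).card = min k ((E.filter (fun e => e.1 = a)).card)) :
    ∃ N ⊆ A'.biUnion E', IsMatching N ∧
      (A' ∩ Mstar.image Prod.fst) ⊆ N.image Prod.fst ∧
      (A' ∩ Mstar.image Prod.fst).card ≤ N.card := by
  classical
  set S := A' ∩ Mstar.image Prod.fst with hSdef
  rcases S.eq_empty_or_nonempty with hSe | ⟨a0, ha0⟩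
  · refine ⟨∅, Finset.empty_subset _, ?_, ?_, ?_⟩
    · intro e he; exact absurd he (Finset.notMem_empty e)
    · rw [hSe]; exact Finset.empty_subset _
    · rw [hSe]; simp
  obtain ⟨e0, he0, he0f⟩ := Finset.mem_image.mp (Finset.mem_inter.mp ha0).2
  haveI : Nonempty β := ⟨e0.2⟩
  have hex : ∀ a : α, ∃ b, a ∈ S → (a, b) ∈ Mstar := by
    intro a
    by_cases h : a ∈ S
    · obtain ⟨e, he, hf⟩ := Finset.mem_image.mp (Finset.mem_inter.mp h).2
      exact ⟨e.2, fun _ => by rwa [← hf, Prod.mk.eta]⟩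
    · exact ⟨Classical.arbitrary β, fun h' => absurd h' h⟩
  choose m hmA using hex
  have hmne : ∀ a ∈ S, ∀ a' ∈ S, a ≠ a' → m a ≠ m a' := by
    intro a ha a' ha' hne
    exact (hM _ (hmA a ha) _ (hmA a' ha')
      (fun hc => hne (congrArg Prod.fst hc))).2
  set S1 : Finset α := S.filter (fun a => (a, m a) ∈ E' a) with hS1def
  set S2 : Finset α := S \ S1 with hS2def
  have hS1S : S1 ⊆ S := Finset.filter_subset _ _
  have hS2S : S2 ⊆ S := Finset.sdiff_subset
  have hSA : S ⊆ A' := Finset.inter_subset_left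
  have hcardS : S.card ≤ k := by rw [← hA']; exact Finset.card_le_card hSA
  have hsplit : S2.card + S1.card = S.card :=
    Finset.card_sdiff_add_card_eq_card hS1S
  have hE2 : ∀ a ∈ S2, (E' a).card = k := by
    intro a ha
    have haS := hS2S ha
    have haA := hSA haS
    have hnot : (a, m a) ∉ E' a := by
      intro hc
      exact (Finset.mem_sdiff.mp ha).2 (Finset.mem_filter.mpr ⟨haS, hc⟩)
    have hmem : (a, m a) ∈ E.filter (fun e => e.1 = a) :=
      Finset.mem_filter.mpr ⟨hME (hmA a haS), rfl⟩
    rcases le_or_gt (E.filter (fun e => e.1 = a)).card k with h | h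
    · exfalso
      have heq : E' a = E.filter (fun e => e.1 = a) :=
        Finset.eq_of_subset_of_card_le (hE'sub a haA)
          (by rw [hE'card a haA, min_eq_right h])
      exact hnot (heq ▸ hmem)
    · rw [hE'card a haA, min_eq_left h.le]
  have hsndinj : ∀ a ∈ A', ∀ e ∈ E' a, ∀ e' ∈ E' a, e.2 = e'.2 → e = e' := by
    intro a ha e he e' he' h2
    have h1 : e.1 = a := (Finset.mem_filter.mp (hE'sub a ha he)).2
    have h1' : e'.1 = a := (Finset.mem_filter.mp (hE'sub a ha he')).2
    exact Prod.ext (h1.trans h1'.symm) h2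
  have himg : ∀ a ∈ S2, ((E' a).image Prod.snd).card = k := by
    intro a ha
    rw [Finset.card_image_of_injOn, hE2 a ha]
    intro e he e' he' h2
    exact hsndinj a (hSA (hS2S ha)) e he e' he' h2
  set t : {x // x ∈ S2} → Finset β :=
    fun x => ((E' (x : α)).image Prod.snd) \ (S1.image m) with htdef
  have hall : ∀ s : Finset {x // x ∈ S2}, s.card ≤ (s.biUnion t).card := by
    intro s
    rcases s.eq_empty_or_nonempty with rfl | ⟨x, hx⟩
    · simp
    · have h1 : s.card ≤ S2.card := by
        calc s.card ≤ Fintype.card {x // x ∈ S2} := Finset.card_le_univ s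
          _ = S2.card := Fintype.card_coe S2
      have hsd := Finset.le_card_sdiff (S1.image m) ((E' (x : α)).image Prod.snd)
      have him := himg (x : α) x.2
      have himle : (S1.image m).card ≤ S1.card := Finset.card_image_le
      have h3 : t x ⊆ s.biUnion t := Finset.subset_biUnion_of_mem t hx
      have h4 : (t x).card ≥ k - S1.card := by
        simp only [htdef]; omega
      have h5 : S2.card ≤ k - S1.card := by omega
      calc s.card ≤ S2.card := h1
        _ ≤ k - S1.card := h5
        _ ≤ (t x).card := h4
        _ ≤ (s.biUnion t).card := Finset.card_le_card h3
  obtain ⟨f, hfinj, hft⟩ :=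
    (Finset.all_card_le_biUnion_card_iff_existsInjective' t).mp hall
  have hfE : ∀ x : {x // x ∈ S2}, ((x : α), f x) ∈ E' (x : α) := by
    intro x
    have h1 := (Finset.mem_sdiff.mp (hft x)).1
    obtain ⟨e, he, h2⟩ := Finset.mem_image.mp h1
    have he1 : e.1 = (x : α) :=
      (Finset.mem_filter.mp (hE'sub _ (hSA (hS2S x.2)) he)).2
    have : e = ((x : α), f x) := Prod.ext he1 h2
    rwa [← this]
  have hfnm : ∀ x : {x // x ∈ S2}, ∀ a ∈ S1, f x ≠ m a := by
    intro x a ha hc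
    exact (Finset.mem_sdiff.mp (hft x)).2 (Finset.mem_image.mpr ⟨a, ha, hc.symm⟩)
  refine ⟨(S1.image fun a => (a, m a)) ∪ (S2.attach.image fun x => (x.1, f x)),
    ?_, ?_, ?_, ?_⟩
  · intro e he
    rcases Finset.mem_union.mp he with h | h
    · obtain ⟨a, ha, rfl⟩ := Finset.mem_image.mp h
      exact Finset.mem_biUnion.mpr ⟨a, hSA (hS1S ha), (Finset.mem_filter.mp ha).2⟩
    · obtain ⟨x, hx, rfl⟩ := Finset.mem_image.mp h
      exact Finset.mem_biUnion.mpr ⟨x.1, hSA (hS2S x.2), hfE x⟩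
  · intro e he e' he' hne
    rcases Finset.mem_union.mp he with h | h <;>
      rcases Finset.mem_union.mp he' with h' | h'
    · obtain ⟨a, ha, rfl⟩ := Finset.mem_image.mp h
      obtain ⟨a', ha', rfl⟩ := Finset.mem_image.mp h'
      have hne' : a ≠ a' := fun hc => hne (by rw [hc])
      exact ⟨hne', hmne a (hS1S ha) a' (hS1S ha') hne'⟩
    · obtain ⟨a, ha, rfl⟩ := Finset.mem_image.mp h
      obtain ⟨x, hx, rfl⟩ := Finset.mem_image.mp h'
      exact ⟨fun hc => (Finset.mem_sdiff.mp x.2).2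
        (by rw [show (↑x : α) = a from hc.symm]; exact ha),
        fun hc => hfnm x a ha hc.symm⟩
    · obtain ⟨x, hx, rfl⟩ := Finset.mem_image.mp h
      obtain ⟨a, ha, rfl⟩ := Finset.mem_image.mp h'
      exact ⟨fun hc => (Finset.mem_sdiff.mp x.2).2
        (by rw [show (↑x : α) = a from hc]; exact ha),
        fun hc => hfnm x a ha hc⟩
    · obtain ⟨x, hx, rfl⟩ := Finset.mem_image.mp h
      obtain ⟨y, hy, rfl⟩ := Finset.mem_image.mp h'
      have hxy : x ≠ y := fun hc => hne (by rw [hc])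
      exact ⟨fun hc => hxy (Subtype.ext hc), fun hc => hxy (hfinj hc)⟩
  · intro a ha
    by_cases h1 : a ∈ S1
    · exact Finset.mem_image.mpr ⟨(a, m a),
        Finset.mem_union_left _ (Finset.mem_image.mpr ⟨a, h1, rfl⟩), rfl⟩
    · have h2 : a ∈ S2 := Finset.mem_sdiff.mpr ⟨ha, h1⟩
      exact Finset.mem_image.mpr ⟨(a, f ⟨a, h2⟩),
        Finset.mem_union_right _ (Finset.mem_image.mpr ⟨⟨a, h2⟩, S2.mem_attach _, rfl⟩), rfl⟩
  · calc S.card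
        ≤ (((S1.image fun a => (a, m a)) ∪
            (S2.attach.image fun x => (x.1, f x))).image Prod.fst).card := by
          apply Finset.card_le_card
          intro a ha
          by_cases h1 : a ∈ S1
          · exact Finset.mem_image.mpr ⟨(a, m a),
              Finset.mem_union_left _ (Finset.mem_image.mpr ⟨a, h1, rfl⟩), rfl⟩
          · have h2 : a ∈ S2 := Finset.mem_sdiff.mpr ⟨ha, h1⟩
            exact Finset.mem_image.mpr ⟨(a, f ⟨a, h2⟩),
              Finset.mem_union_right _ (Finset.mem_image.mpr ⟨⟨a, h2⟩, S2.mem_attach _, rfl⟩), rfl⟩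
      _ ≤ _ := Finset.card_image_le
end

section
/- Let G = (A, B, E) be a bipartite graph with |A| + |B| = n and let 1 ≤ k ≤ |A|. Consider the algorithm that picks a uniformly random k-subset A' ⊆ A, stores for each a ∈ A' an arbitrary set of min{k, deg(a)} incident edges, and outputs a maximum matching M among the stored edges. Then E[|M|] ≥ (k/n)·|M*|, where M* is a maximum matching of G; i.e., the algorithm has expected approximation ratio at most n/k. -/
namespace IsMatching

variable {α β : Type*}

theorem subset {M N : Finset (α × β)} (hM : IsMatching M) (hNM : N ⊆ M) : IsMatching N :=
  fun e he e' he' hne => hM e (hNM he) e' (hNM he') hne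

theorem injOn_fst {M : Finset (α × β)} (hM : IsMatching M) :
    Set.InjOn Prod.fst (M : Set (α × β)) :=
  fun e he e' he' h => by_contra fun hne => (hM e he e' he' hne).1 h

theorem insert_of_forall_ne [DecidableEq α] [DecidableEq β] {N : Finset (α × β)}
    (hN : IsMatching N) {e : α × β} (he : ∀ e' ∈ N, e.1 ≠ e'.1 ∧ e.2 ≠ e'.2) :
    IsMatching (insert e N) := by
  intro x hx y hy hne
  rcases Finset.mem_insert.1 hx with hxe | hx <;> rcases Finset.mem_insert.1 hy with hye | hy
  · exact absurd (hxe.trans hye.symm) hne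
  · exact hxe ▸ he y hy
  · exact hye ▸ (he x hx).imp Ne.symm Ne.symm
  · exact hN x hx y hy hne

/-- Edges at a common vertex `a` have distinct right endpoints, so more of them than the
matching has edges leave one whose right endpoint is free. -/
theorem exists_insert [DecidableEq α] [DecidableEq β] {N F : Finset (α × β)}
    (hN : IsMatching N) {a : α} (haN : ∀ e ∈ N, e.1 ≠ a) (hF : ∀ e ∈ F, e.1 = a)
    (hcard : N.card < F.card) : ∃ e ∈ F, e ∉ N ∧ IsMatching (insert e N) := by
  have hinj : Set.InjOn Prod.snd (F : Set (α × β)) :=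
    fun e he e' he' h => Prod.ext ((hF e he).trans (hF e' he').symm) h
  have hlt : (N.image Prod.snd).card < (F.image Prod.snd).card := by
    rw [Finset.card_image_of_injOn hinj]
    exact Finset.card_image_le.trans_lt hcard
  obtain ⟨b, hbF, hbN⟩ := Finset.exists_mem_notMem_of_card_lt_card hlt
  obtain ⟨e, heF, rfl⟩ := Finset.mem_image.1 hbF
  have hfree : ∀ e' ∈ N, e.2 ≠ e'.2 :=
    fun e' he' h => hbN (Finset.mem_image.2 ⟨e', he', h.symm⟩)
  refine ⟨e, heF, fun he => hfree e he rfl,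
    hN.insert_of_forall_ne fun e' he' => ⟨?_, hfree e' he'⟩⟩
  rw [hF e heF]
  exact (haN e' he').symm

theorem exists_extend [DecidableEq α] [DecidableEq β] {N₀ : Finset (α × β)}
    (hN₀ : IsMatching N₀) (F : α → Finset (α × β)) (hF : ∀ a, ∀ e ∈ F a, e.1 = a)
    (U : Finset α)
    (hU : ∀ e ∈ N₀, e.1 ∉ U) (hcard : ∀ a ∈ U, N₀.card + U.card ≤ (F a).card) :
    ∃ N ⊆ N₀ ∪ U.biUnion F, IsMatching N ∧ N.card = N₀.card + U.card := by
  induction U using Finset.induction_on with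
  | empty => exact ⟨N₀, by simp, hN₀, rfl⟩
  | @insert a U haU ih =>
    obtain ⟨N, hNsub, hN, hNcard⟩ := ih
      (fun e he heU => hU e he (Finset.mem_insert_of_mem heU))
      (fun b hb => by
        have := hcard b (Finset.mem_insert_of_mem hb)
        rw [Finset.card_insert_of_notMem haU] at this
        omega)
    have haN : ∀ e ∈ N, e.1 ≠ a := by
      intro e he hea
      rcases Finset.mem_union.1 (hNsub he) with he | he
      · exact hU e he (hea ▸ Finset.mem_insert_self a U)
      · obtain ⟨b, hb, heb⟩ := Finset.mem_biUnion.1 he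
        exact haU (hea ▸ hF b e heb ▸ hb)
    have hlt : N.card < (F a).card := by
      have := hcard a (Finset.mem_insert_self a U)
      rw [Finset.card_insert_of_notMem haU] at this
      omega
    obtain ⟨e, heF, heN, hNe⟩ := hN.exists_insert haN (hF a) hlt
    refine ⟨insert e N, Finset.insert_subset ?_ (hNsub.trans ?_), hNe, ?_⟩
    · exact Finset.mem_union_right _
        (Finset.mem_biUnion.2 ⟨a, Finset.mem_insert_self a U, heF⟩)
    · exact Finset.union_subset_union_right
        (Finset.biUnion_subset_biUnion_of_subset_left _ (Finset.subset_insert a U))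
    · rw [Finset.card_insert_of_notMem heN, Finset.card_insert_of_notMem haU, hNcard]
      rfl

theorem card_filter_fst_mem [DecidableEq α] {M : Finset (α × β)} (hM : IsMatching M)
    {S : Finset α} (hS : S ⊆ M.image Prod.fst) :
    (M.filter (fun e => e.1 ∈ S)).card = S.card := by
  rw [← Finset.card_image_of_injOn (hM.subset (Finset.filter_subset _ M)).injOn_fst]
  congr 1
  ext a
  simp only [Finset.mem_image, Finset.mem_filter]
  constructor
  · rintro ⟨e, ⟨-, he⟩, rfl⟩
    exact he
  · intro ha
    obtain ⟨e, he, rfl⟩ := Finset.mem_image.1 (hS ha)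
    exact ⟨e, ⟨he, ha⟩, rfl⟩

end IsMatching

theorem exists_isMatching_stored {α β : Type*} [DecidableEq α] [DecidableEq β]
    {E Mstar : Finset (α × β)} (hME : Mstar ⊆ E) (hM : IsMatching Mstar) {k : ℕ}
    (E' : α → Finset (α × β)) (hE'sub : ∀ a, E' a ⊆ E.filter (fun e => e.1 = a))
    (hE'card : ∀ a, (E' a).card = min k ((E.filter (fun e => e.1 = a)).card))
    {A' : Finset α} (hA' : A'.card ≤ k) :
    ∃ N ⊆ A'.biUnion E', IsMatching N ∧ (A' ∩ Mstar.image Prod.fst).card ≤ N.card := by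
  set T := A' ∩ Mstar.image Prod.fst
  set Ts := T.filter (fun a => (E.filter (fun e => e.1 = a)).card ≤ k)
  set Tb := T.filter (fun a => ¬(E.filter (fun e => e.1 = a)).card ≤ k)
  set N₀ := Mstar.filter (fun e => e.1 ∈ Ts)
  have hE'fst : ∀ a, ∀ e ∈ E' a, e.1 = a :=
    fun a e he => (Finset.mem_filter.1 (hE'sub a he)).2
  have hN₀sub : N₀ ⊆ Ts.biUnion E' := by
    intro e he
    obtain ⟨heM, heTs⟩ := Finset.mem_filter.1 he
    have hfull : E' e.1 = E.filter (fun e' => e'.1 = e.1) :=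
      Finset.eq_of_subset_of_card_le (hE'sub e.1)
        (by rw [hE'card, min_eq_right (Finset.mem_filter.1 heTs).2])
    exact Finset.mem_biUnion.2 ⟨e.1, heTs, hfull ▸ Finset.mem_filter.2 ⟨hME heM, rfl⟩⟩
  have hN₀card : N₀.card = Ts.card :=
    hM.card_filter_fst_mem ((Finset.filter_subset _ T).trans Finset.inter_subset_right)
  have hT : Ts.card + Tb.card = T.card := Finset.card_filter_add_card_filter_not _
  have hTk : T.card ≤ k := (Finset.card_le_card Finset.inter_subset_left).trans hA'
  have hN₀ : IsMatching N₀ := hM.subset (Finset.filter_subset _ Mstar)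
  obtain ⟨N, hNsub, hN, hNcard⟩ := hN₀.exists_extend E' hE'fst Tb
    (fun e he heTb => (Finset.mem_filter.1 heTb).2
      (Finset.mem_filter.1 (Finset.mem_filter.1 he).2).2)
    (fun a ha => by
      rw [hN₀card, hE'card, min_eq_left (le_of_not_ge (Finset.mem_filter.1 ha).2)]
      omega)
  have hTA' : ∀ U ⊆ T, U.biUnion E' ⊆ A'.biUnion E' := fun U hU =>
    Finset.biUnion_subset_biUnion_of_subset_left _ (hU.trans Finset.inter_subset_left)
  refine ⟨N, hNsub.trans (Finset.union_subset ?_ ?_), hN, ?_⟩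
  · exact hN₀sub.trans (hTA' Ts (Finset.filter_subset _ T))
  · exact hTA' Tb (Finset.filter_subset _ T)
  · rw [hNcard, hN₀card, hT]

theorem sum_card_inter_powersetCard {α : Type*} [DecidableEq α] {s S : Finset α} (hS : S ⊆ s)
    {k : ℕ} (hk : 1 ≤ k) :
    ∑ A ∈ s.powersetCard k, (A ∩ S).card = S.card * (s.card - 1).choose (k - 1) := by
  calc ∑ A ∈ s.powersetCard k, (A ∩ S).card
      = ∑ A ∈ s.powersetCard k, ∑ a ∈ S, if a ∈ A then 1 else 0 := by
        simp only [Finset.inter_comm _ S, ← Finset.filter_mem_eq_inter, Finset.card_filter]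
    _ = ∑ a ∈ S, ((s.powersetCard k).filter ({a} ⊆ ·)).card := by
        rw [Finset.sum_comm]
        simp only [Finset.singleton_subset_iff, Finset.card_filter]
    _ = S.card * (s.card - 1).choose (k - 1) := by
        rw [Finset.sum_congr rfl fun a ha => Finset.card_filter_powersetCard_subset {a} s k
          (Finset.singleton_subset_iff.2 (hS ha)) hk]
        simp

theorem sum_card_inter_powersetCard_div_card {α : Type*} [DecidableEq α] {s S : Finset α}
    (hS : S ⊆ s) {k : ℕ} (hk : 1 ≤ k) (hks : k ≤ s.card) :
    (∑ A ∈ s.powersetCard k, ((A ∩ S).card : ℝ)) / (s.powersetCard k).card =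
      k * S.card / s.card := by
  obtain ⟨n, hn⟩ : ∃ n, s.card = n + 1 := ⟨s.card - 1, by omega⟩
  obtain ⟨j, rfl⟩ : ∃ j, k = j + 1 := ⟨k - 1, by omega⟩
  have hpascal := Nat.add_one_mul_choose_eq n j
  have hchoose : 0 < (n + 1).choose (j + 1) := Nat.choose_pos (hn ▸ hks)
  rw [← Nat.cast_sum, sum_card_inter_powersetCard hS hk, Finset.card_powersetCard, hn,
    div_eq_div_iff (by positivity) (by positivity)]
  have hpascal' : ((n : ℝ) + 1) * n.choose j = (n + 1).choose (j + 1) * (j + 1) := by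
    exact_mod_cast hpascal
  simp only [Nat.add_sub_cancel]
  push_cast
  linear_combination (S.card : ℝ) * hpascal'

theorem stmt_8_general {α β : Type*} [Fintype α] [Fintype β] [DecidableEq α] [DecidableEq β]
    (E Mstar : Finset (α × β)) (hME : Mstar ⊆ E) (hM : IsMatching Mstar)
    (k : ℕ) (hk1 : 1 ≤ k) (hk2 : k ≤ Fintype.card α)
    (E' : α → Finset (α × β))
    (hE'sub : ∀ a, E' a ⊆ E.filter (fun e => e.1 = a))
    (hE'card : ∀ a, (E' a).card = min k ((E.filter (fun e => e.1 = a)).card))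
    (M : Finset α → Finset (α × β))
    (hMmax : ∀ A' ∈ (Finset.univ : Finset α).powersetCard k,
      ∀ N ⊆ A'.biUnion E', IsMatching N → N.card ≤ (M A').card) :
    (k : ℝ) / (Fintype.card α + Fintype.card β) * Mstar.card ≤
      (∑ A' ∈ (Finset.univ : Finset α).powersetCard k, ((M A').card : ℝ)) /
        (((Finset.univ : Finset α).powersetCard k).card : ℝ) := by
  set S := Mstar.image Prod.fst
  have hS : S.card = Mstar.card := Finset.card_image_of_injOn hM.injOn_fst
  have hα : (0 : ℝ) < Fintype.card α := by exact_mod_cast hk1.trans hk2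
  calc (k : ℝ) / (Fintype.card α + Fintype.card β) * Mstar.card
      ≤ k * S.card / Fintype.card α := by
        rw [hS, div_mul_eq_mul_div]
        gcongr
        exact le_add_of_nonneg_right (Nat.cast_nonneg _)
    _ = (∑ A' ∈ (Finset.univ : Finset α).powersetCard k, ((A' ∩ S).card : ℝ)) /
          ((Finset.univ : Finset α).powersetCard k).card :=
        (sum_card_inter_powersetCard_div_card (Finset.subset_univ S) hk1 hk2).symm
    _ ≤ _ := by
        gcongr with A' hA'
        obtain ⟨N, hNsub, hN, hNcard⟩ := exists_isMatching_stored hME hM E' hE'sub hE'card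
          (Finset.mem_powersetCard.1 hA').2.le
        exact_mod_cast hNcard.trans (hMmax A' hA' N hNsub hN)

/-- The algorithm that picks a uniformly random k-subset A' of A, stores for each
    a ∈ A' an arbitrary set of min{k, deg(a)} incident edges, and outputs a maximum
    matching M(A') among the stored edges satisfies E[|M|] ≥ (k/n)·|M*|. -/
theorem stmt_8 {α β : Type*} [Fintype α] [Fintype β] [DecidableEq α] [DecidableEq β]
    (E Mstar : Finset (α × β)) (hME : Mstar ⊆ E) (hM : IsMatching Mstar)
    (hmax : ∀ N ⊆ E, IsMatching N → N.card ≤ Mstar.card)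
    (k : ℕ) (hk1 : 1 ≤ k) (hk2 : k ≤ Fintype.card α)
    (E' : α → Finset (α × β))
    (hE'sub : ∀ a, E' a ⊆ E.filter (fun e => e.1 = a))
    (hE'card : ∀ a, (E' a).card = min k ((E.filter (fun e => e.1 = a)).card))
    (M : Finset α → Finset (α × β))
    (hMsub : ∀ A' ∈ (Finset.univ : Finset α).powersetCard k, M A' ⊆ A'.biUnion E')
    (hMmatch : ∀ A' ∈ (Finset.univ : Finset α).powersetCard k, IsMatching (M A'))
    (hMmax : ∀ A' ∈ (Finset.univ : Finset α).powersetCard k,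
      ∀ N ⊆ A'.biUnion E', IsMatching N → N.card ≤ (M A').card) :
    (k : ℝ) / (Fintype.card α + Fintype.card β) * Mstar.card ≤
      (∑ A' ∈ (Finset.univ : Finset α).powersetCard k, ((M A').card : ℝ)) /
        (((Finset.univ : Finset α).powersetCard k).card : ℝ) :=
  stmt_8_general E Mstar hME hM k hk1 hk2 E' hE'sub hE'card M hMmax
end

section
/- Let k be an even positive integer and l an integer with 1 ≤ l ≤ k/4. Then C(k-l, k/2 - l) = C(k-l, k/2) and C(k-l, k/2) < (3/4)^l · C(k, k/2). -/
lemma stmt_15_key (m r : ℕ) : (m + 1) * m.choose r = (m + 1).choose r * (m + 1 - r) := by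
  rw [← Nat.choose_succ_right_eq]
  exact Nat.add_one_mul_choose_eq m r

lemma stmt_15_aux (h : ℕ) : ∀ l, 1 ≤ l → 4 * l ≤ h + h →
    (((h + h - l).choose h : ℝ)) < (3 / 4 : ℝ) ^ l * ((h + h).choose h : ℝ) := by
  intro l hl
  induction l, hl using Nat.le_induction with
  | base =>
    intro hlk
    have hh : 1 ≤ h := by omega
    have key := stmt_15_key (h + h - 1) h
    rw [show h + h - 1 + 1 = h + h by omega, show h + h - h = h by omega] at key
    have eq : ((h + h : ℕ) : ℝ) * ((h + h - 1).choose h : ℝ)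
        = ((h + h).choose h : ℝ) * (h : ℝ) := by exact_mod_cast key
    have hB : (0 : ℝ) < ((h + h).choose h : ℝ) := by
      exact_mod_cast Nat.choose_pos (by omega)
    have hhr : (0 : ℝ) < (h : ℝ) := by exact_mod_cast hh
    push_cast at eq
    nlinarith [mul_pos hB hhr]
  | succ l hl ih =>
    intro hlk
    have hh : 1 ≤ h := by omega
    have key := stmt_15_key (h + h - (l + 1)) h
    rw [show h + h - (l + 1) + 1 = h + h - l by omega,
        show h + h - l - h = h - l by omega] at key
    have eq : ((h + h - l : ℕ) : ℝ) * ((h + h - (l + 1)).choose h : ℝ)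
        = ((h + h - l).choose h : ℝ) * ((h - l : ℕ) : ℝ) := by exact_mod_cast key
    have h1 : ((h + h - l : ℕ) : ℝ) = (h : ℝ) + h - l := by
      have : l ≤ h + h := by omega
      push_cast [this]; ring
    have h2 : ((h - l : ℕ) : ℝ) = (h : ℝ) - l := by
      have : l ≤ h := by omega
      push_cast [this]; ring
    rw [h1, h2] at eq
    have hB : (0 : ℝ) < ((h + h - l).choose h : ℝ) := by
      exact_mod_cast Nat.choose_pos (by omega)
    have ih' := ih (by omega)
    have hlr : (l : ℝ) ≤ h := by exact_mod_cast (by omega : l ≤ h)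
    have hhr : (1 : ℝ) ≤ h := by exact_mod_cast hh
    have hA34 : ((h + h - (l + 1)).choose h : ℝ) < 3 / 4 * ((h + h - l).choose h : ℝ) := by
      nlinarith [mul_pos hB (show (0:ℝ) < 2*h + l by positivity)]
    calc ((h + h - (l + 1)).choose h : ℝ)
        < 3 / 4 * ((h + h - l).choose h : ℝ) := hA34
      _ < 3 / 4 * ((3 / 4 : ℝ) ^ l * ((h + h).choose h : ℝ)) := by linarith
      _ = (3 / 4 : ℝ) ^ (l + 1) * ((h + h).choose h : ℝ) := by ring

/-- For even k and 1 ≤ l ≤ k/4: C(k-l, k/2 - l) = C(k-l, k/2) and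
    C(k-l, k/2) < (3/4)^l · C(k, k/2). -/
theorem stmt_15 (k l : ℕ) (he : Even k) (hl : 1 ≤ l) (hlk : l ≤ k / 4) :
    (k - l).choose (k / 2 - l) = (k - l).choose (k / 2) ∧
    (((k - l).choose (k / 2) : ℝ)) < (3 / 4 : ℝ) ^ l * (k.choose (k / 2) : ℝ) := by
  obtain ⟨h, hk⟩ := he
  subst hk
  have h2 : (h + h) / 2 = h := by omega
  rw [h2]
  have hlk4 : 4 * l ≤ h + h := by omega
  constructor
  · have hs := Nat.choose_symm (show h ≤ h + h - l by omega)
    rwa [show h + h - l - h = h - l by omega] at hs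
  · exact stmt_15_aux h l hl hlk4
end
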